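/- Define Δ¹h(k,ℓ) = h(k+1,ℓ) - h(k,ℓ) where h(k,ℓ) = f(k)P(X_ℓ=k) - P(X_ℓ ≥ k+1). Then for all ℓ ≥ 1 and k ≤ ℓ-1: Δ¹h(k,ℓ+1) = ((ℓ - f(k+1))/(ℓ+1)) Δ¹h(k,ℓ) + (f(k)/(ℓ+1)) Δ¹h(k-1,ℓ). -/

import Mathlib

open Finset

/-- `ChainLaw f p` says that `p ℓ k = P(X_ℓ = k)` is the law of the Markov chain
`(X_ℓ)_{ℓ ≥ 1}` with `X_1 = 0` and time-inhomogeneous transitions: from state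
`i` at time `n`, move to `i+1` with probability `f i/(n+1)`, return to `0` with
probability `1/(n+1)` if `i ≥ 1` (so that it stays at `i` with probability
`(n - f i)/(n+1)`), and, from `i = 0`, move to `1` with probability `f 0/(n+1)`
and stay at `0` otherwise.  (The chain has total mass one, so the probability
of being at `0` at time `n+1` is
`p n 0 (n+1-f 0)/(n+1) + (∑_{i ≥ 1} p n i)/(n+1) = p n 0 (n+1-f 0)/(n+1) + (1 - p n 0)/(n+1)`.) -/
def ChainLaw (f : ℕ → ℝ) (p : ℕ → ℕ → ℝ) : Prop :=
  (∀ k, p 1 k = if k = 0 then 1 else 0) ∧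
  (∀ n, 1 ≤ n →
    p (n + 1) 0 = p n 0 * (((n : ℝ) + 1 - f 0) / ((n : ℝ) + 1))
      + (1 - p n 0) * (1 / ((n : ℝ) + 1))) ∧
  (∀ n, 1 ≤ n → ∀ j, 1 ≤ j →
    p (n + 1) j = p n (j - 1) * (f (j - 1) / ((n : ℝ) + 1))
      + p n j * (((n : ℝ) - f j) / ((n : ℝ) + 1)))

/-- `Hk f p k ℓ = f k P(X_ℓ = k) - P(X_ℓ ≥ k+1)`; since `X_ℓ ≤ ℓ - 1` a.s.,
`P(X_ℓ ≥ k+1) = ∑_{j=k+1}^{ℓ-1} p ℓ j`. -/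
def Hk (f : ℕ → ℝ) (p : ℕ → ℕ → ℝ) (k ℓ : ℕ) : ℝ :=
  f k * p ℓ k - ∑ j ∈ Finset.Ico (k + 1) ℓ, p ℓ j

/-- The increment `Δ¹h(k,ℓ) = h(k+1,ℓ) - h(k,ℓ)`. -/
def DHk (f : ℕ → ℝ) (p : ℕ → ℕ → ℝ) (k ℓ : ℕ) : ℝ :=
  Hk f p (k + 1) ℓ - Hk f p k ℓ

/-! Writing `T(k,ℓ) = P(X_ℓ > k)`, one step of the chain gives
`T(k,ℓ+1) = (f k P(X_ℓ = k) + ℓ T(k,ℓ))/(ℓ+1)`. Combined with the transition rule for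
`P(X_{ℓ+1} = k)` this makes each `h(k,·)` satisfy
`h(k,ℓ+1) = ((ℓ - f k)/(ℓ+1)) h(k,ℓ) + (f k/(ℓ+1)) h(k-1,ℓ)`, where for `k = 0` the second
term vanishes because the chain has total mass one. Differencing in `k` gives the recursion. -/

namespace ChainLaw

variable {f : ℕ → ℝ} {p : ℕ → ℕ → ℝ}

theorem succ_zero (hp : ChainLaw f p) {n : ℕ} (hn : 1 ≤ n) :
    p (n + 1) 0 = (p n 0 * ((n : ℝ) + 1 - f 0) + (1 - p n 0)) / ((n : ℝ) + 1) := by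
  rw [hp.2.1 n hn]
  ring

theorem succ_succ (hp : ChainLaw f p) {n : ℕ} (hn : 1 ≤ n) (j : ℕ) :
    p (n + 1) (j + 1) = (f j * p n j + ((n : ℝ) - f (j + 1)) * p n (j + 1)) / ((n : ℝ) + 1) := by
  rw [hp.2.2 n hn (j + 1) (Nat.le_add_left 1 j), Nat.add_sub_cancel]
  ring

theorem eq_zero_of_le (hp : ChainLaw f p) {n : ℕ} (hn : 1 ≤ n) {j : ℕ} (hj : n ≤ j) :
    p n j = 0 := by
  induction n, hn using Nat.le_induction generalizing j with
  | base => rw [hp.1 j, if_neg (by omega)]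
  | succ n hn ih =>
    obtain ⟨i, rfl⟩ : ∃ i, j = i + 1 := ⟨j - 1, by omega⟩
    rw [hp.succ_succ hn, ih (by omega), ih (by omega)]
    simp

theorem sum_Ico_eq_add (hp : ChainLaw f p) {n : ℕ} (hn : 1 ≤ n) (k : ℕ) :
    ∑ j ∈ Ico k n, p n j = p n k + ∑ j ∈ Ico (k + 1) n, p n j := by
  rcases lt_or_ge k n with hk | hk
  · exact sum_eq_sum_Ico_succ_bot hk _
  · simp [Ico_eq_empty_of_le hk, Ico_eq_empty_of_le (hk.trans k.le_succ), hp.eq_zero_of_le hn hk]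

/-- Mass above `k` survives a step with probability `ℓ/(ℓ+1)` (it is lost only by a reset),
and new mass enters only from `k`, at rate `f k/(ℓ+1)`. -/
theorem sum_Ico_succ (hp : ChainLaw f p) {ℓ : ℕ} (hℓ : 1 ≤ ℓ) (k : ℕ) :
    ∑ j ∈ Ico (k + 1) (ℓ + 1), p (ℓ + 1) j
      = (f k * p ℓ k + ℓ * ∑ j ∈ Ico (k + 1) ℓ, p ℓ j) / ((ℓ : ℝ) + 1) := by
  rcases lt_or_ge k ℓ with hk | hk
  · have hdrift : ∑ i ∈ Ico k ℓ, f i * p ℓ i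
        = f k * p ℓ k + ∑ i ∈ Ico (k + 1) ℓ, f i * p ℓ i :=
      sum_eq_sum_Ico_succ_bot hk _
    have hstay : ∑ i ∈ Ico k ℓ, ((ℓ : ℝ) - f (i + 1)) * p ℓ (i + 1)
        = ∑ i ∈ Ico (k + 1) ℓ, ((ℓ : ℝ) - f i) * p ℓ i := by
      rw [sum_Ico_add' (fun i ↦ ((ℓ : ℝ) - f i) * p ℓ i), sum_Ico_succ_top (by omega),
        hp.eq_zero_of_le hℓ le_rfl, mul_zero, add_zero]
    rw [← sum_Ico_add' (fun j ↦ p (ℓ + 1) j)]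
    simp_rw [hp.succ_succ hℓ, ← sum_div, sum_add_distrib, hdrift, hstay, mul_sum,
      add_assoc, ← sum_add_distrib]
    congr 2
    exact sum_congr rfl fun i _ ↦ by ring
  · simp [Ico_eq_empty_of_le (Nat.succ_le_succ hk), Ico_eq_empty_of_le (hk.trans k.le_succ),
      hp.eq_zero_of_le hℓ hk]

theorem sum_Ico_one_eq_one_sub (hp : ChainLaw f p) {ℓ : ℕ} (hℓ : 1 ≤ ℓ) :
    ∑ j ∈ Ico 1 ℓ, p ℓ j = 1 - p ℓ 0 := by
  induction ℓ, hℓ using Nat.le_induction with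
  | base => simp [hp.1]
  | succ ℓ hℓ ih =>
    rw [hp.sum_Ico_succ hℓ 0, ih, hp.succ_zero hℓ]
    field_simp
    ring

theorem Hk_succ_succ (hp : ChainLaw f p) {ℓ k : ℕ} (hℓ : 1 ≤ ℓ) :
    Hk f p (k + 1) (ℓ + 1) = (((ℓ : ℝ) - f (k + 1)) / ((ℓ : ℝ) + 1)) * Hk f p (k + 1) ℓ
      + (f (k + 1) / ((ℓ : ℝ) + 1)) * Hk f p k ℓ := by
  unfold Hk
  rw [hp.succ_succ hℓ, hp.sum_Ico_succ hℓ, hp.sum_Ico_eq_add hℓ (k + 1)]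
  field_simp
  ring

theorem Hk_zero_succ (hp : ChainLaw f p) {ℓ : ℕ} (hℓ : 1 ≤ ℓ) :
    Hk f p 0 (ℓ + 1) = (((ℓ : ℝ) - f 0) / ((ℓ : ℝ) + 1)) * Hk f p 0 ℓ := by
  unfold Hk
  rw [hp.succ_zero hℓ, hp.sum_Ico_succ hℓ, zero_add, hp.sum_Ico_one_eq_one_sub hℓ]
  field_simp
  ring

end ChainLaw

theorem DHk_recursion_general (f : ℕ → ℝ) (p : ℕ → ℕ → ℝ) (hp : ChainLaw f p) :
    ∀ ℓ, 1 ≤ ℓ → ∀ k, k ≤ ℓ - 1 →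
      DHk f p k (ℓ + 1)
        = (((ℓ : ℝ) - f (k + 1)) / ((ℓ : ℝ) + 1)) * DHk f p k ℓ
          + (f k / ((ℓ : ℝ) + 1)) *
              (if k = 0 then Hk f p 0 ℓ else DHk f p (k - 1) ℓ) := by
  intro ℓ hℓ k _
  unfold DHk
  rcases k with _ | k
  · rw [if_pos rfl, hp.Hk_succ_succ hℓ, hp.Hk_zero_succ hℓ]
    ring
  · rw [if_neg k.succ_ne_zero, Nat.add_sub_cancel, hp.Hk_succ_succ hℓ, hp.Hk_succ_succ hℓ]
    ring

/-- for all `ℓ ≥ 1` and `k ≤ ℓ - 1`,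
`Δ¹h(k,ℓ+1) = ((ℓ - f(k+1))/(ℓ+1)) Δ¹h(k,ℓ) + (f k/(ℓ+1)) Δ¹h(k-1,ℓ)`,
where `Δ¹h(-1,ℓ) = h(0,ℓ) - h(-1,ℓ) = h(0,ℓ)` by the convention `h(-1,ℓ) = 0`. -/
theorem DHk_recursion (f : ℕ → ℝ) (hfpos : ∀ k, 0 < f k)
    (hfle : ∀ k, f k ≤ (k : ℝ) + 1) (p : ℕ → ℕ → ℝ) (hp : ChainLaw f p) :
    ∀ ℓ, 1 ≤ ℓ → ∀ k, k ≤ ℓ - 1 →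
      DHk f p k (ℓ + 1)
        = (((ℓ : ℝ) - f (k + 1)) / ((ℓ : ℝ) + 1)) * DHk f p k ℓ
          + (f k / ((ℓ : ℝ) + 1)) *
              (if k = 0 then Hk f p 0 ℓ else DHk f p (k - 1) ℓ) :=
  DHk_recursion_general f p hp
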